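/- For positive integers p, q, n, i, j, k with t = ⌊(n−2)/p⌋, N = n + q·t, i = p(j−1) + k, 1 ≤ k ≤ p, 1 ≤ j ≤ t, and n ≥ i + 2, it holds that N − (i + 1) > q·(j − 1) + q·⌊k/p⌋. -/

import Mathlib

theorem stmt_3_general (p q n i j k t N : ℕ)
    (hN : N = n + q * t)
    (hkp : k ≤ p)
    (hj1 : 1 ≤ j) (hjt : j ≤ t) (hn : i + 2 ≤ n) :
    N - (i + 1) > q * (j - 1) + q * (k / p) := by
  have hdiv : k / p ≤ 1 := Nat.div_le_of_le_mul (by rwa [mul_one])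
  have hred : q * (j - 1) + q * (k / p) ≤ q * t := by
    rw [← mul_add]
    exact Nat.mul_le_mul_left q (by omega)
  omega

theorem stmt_3 (p q n i j k t N : ℕ) (hp : 0 < p) (hq : 0 < q)
    (ht : t = (n - 2) / p) (hN : N = n + q * t)
    (hi : i = p * (j - 1) + k) (hk1 : 1 ≤ k) (hkp : k ≤ p)
    (hj1 : 1 ≤ j) (hjt : j ≤ t) (hn : i + 2 ≤ n) :
    N - (i + 1) > q * (j - 1) + q * (k / p) :=
  stmt_3_general p q n i j k t N hN hkp hj1 hjt hn
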